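/- For any sequence s = (x_n) in a V-category (X,a) and any x ∈ X, ⋁_{N} ⋀_{n ≥ N} a(x_n, x) ≥ C(s) ⊗ ⋀_{N} ⋁_{n ≥ N} a(x_n, x), where C(s) = ⋁_{N} ⋀_{n,m ≥ N} a(x_n, x_m). -/

import Mathlib

/-- A (commutative, unital) quantale structure on a complete lattice `V`:
an associative commutative multiplication `⊗` with unit `k` such that
`u ⊗ -` preserves arbitrary suprema. -/
structure QuantaleStr (V : Type*) [CompleteLattice V] where
  mul : V → V → V
  k : V
  mul_comm : ∀ a b, mul a b = mul b a
  mul_assoc : ∀ a b c, mul (mul a b) c = mul a (mul b c)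
  mul_unit : ∀ a, mul a k = a
  mul_sSup : ∀ (a : V) (S : Set V), mul a (sSup S) = ⨆ b ∈ S, mul a b

variable {V : Type*} [CompleteLattice V]

/-- `a : X → X → V` is a `V`-category structure: `k ≤ a x x` and
`a x y ⊗ a y z ≤ a x z`. -/
def IsVCat (Q : QuantaleStr V) {X : Type*} (a : X → X → V) : Prop :=
  (∀ x, Q.k ≤ a x x) ∧ ∀ x y z, Q.mul (a x y) (a y z) ≤ a x z


/-- The "Cauchyness" of a sequence `s` in a `V`-category `(X,a)`:
`C s = ⨆ N, ⨅_{n,m ≥ N} a (s n) (s m)`. -/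
def cauchyDeg (Q : QuantaleStr V) {X : Type*} (a : X → X → V) (s : ℕ → X) : V :=
  ⨆ N : ℕ, ⨅ n : ℕ, ⨅ m : ℕ, ⨅ _ : N ≤ n, ⨅ _ : N ≤ m, a (s n) (s m)

/-- `s` is a Cauchy sequence if `k ≤ C s`. -/
def IsCauchySeq (Q : QuantaleStr V) {X : Type*} (a : X → X → V) (s : ℕ → X) : Prop :=
  Q.k ≤ cauchyDeg Q a s


/-!
Fix a stage `N` and write `C_N = ⋀_{n,m ≥ N} a(xₙ, xₘ)`. For `n, m ≥ N` transitivity gives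
`C_N ⊗ a(xₘ, x) ≤ a(xₙ, xₘ) ⊗ a(xₘ, x) ≤ a(xₙ, x)`; since `C_N ⊗ -` preserves suprema, this
bounds `C_N ⊗ ⋁_{m ≥ N} a(xₘ, x)`, hence `C_N ⊗ limsup`, by `⋀_{n ≥ N} a(xₙ, x)`.
Taking the supremum over `N` on both sides finishes the proof.
-/

namespace QuantaleStr

variable (Q : QuantaleStr V)

lemma mul_iSup {ι : Sort*} (u : V) (f : ι → V) : Q.mul u (⨆ i, f i) = ⨆ i, Q.mul u (f i) := by
  rw [iSup, Q.mul_sSup, iSup_range]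

lemma iSup_mul {ι : Sort*} (f : ι → V) (u : V) : Q.mul (⨆ i, f i) u = ⨆ i, Q.mul (f i) u := by
  simp only [Q.mul_comm _ u, Q.mul_iSup]

lemma mul_sup (u b c : V) : Q.mul u (b ⊔ c) = Q.mul u b ⊔ Q.mul u c := by
  rw [← sSup_pair, Q.mul_sSup, iSup_insert, iSup_singleton]

variable {Q}

lemma mul_le_mul_left {b c : V} (h : b ≤ c) (u : V) : Q.mul u b ≤ Q.mul u c := by
  rw [← sup_eq_right.2 h, Q.mul_sup]
  exact le_sup_left

lemma mul_le_mul_right {b c : V} (h : b ≤ c) (u : V) : Q.mul b u ≤ Q.mul c u := by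
  rw [Q.mul_comm b, Q.mul_comm c]
  exact mul_le_mul_left h u

end QuantaleStr

lemma iInf_tail_le {X : Type*} (a : X → X → V) (s : ℕ → X) {N n m : ℕ} (hn : N ≤ n)
    (hm : N ≤ m) : ⨅ n, ⨅ m, ⨅ _ : N ≤ n, ⨅ _ : N ≤ m, a (s n) (s m) ≤ a (s n) (s m) :=
  (iInf_le _ n).trans <| (iInf_le _ m).trans <| (iInf_le _ hn).trans (iInf_le _ hm)

lemma IsVCat.mul_iSup_tail_le {Q : QuantaleStr V} {X : Type*} {a : X → X → V}
    (ha : IsVCat Q a) (s : ℕ → X) (x : X) {N n : ℕ} (hn : N ≤ n) :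
    Q.mul (⨅ n, ⨅ m, ⨅ _ : N ≤ n, ⨅ _ : N ≤ m, a (s n) (s m)) (⨆ m, ⨆ _ : N ≤ m, a (s m) x) ≤
      a (s n) x := by
  simp only [Q.mul_iSup]
  refine iSup₂_le fun m hm => ?_
  calc _ ≤ Q.mul (a (s n) (s m)) (a (s m) x) :=
        QuantaleStr.mul_le_mul_right (iInf_tail_le a s hn hm) _
    _ ≤ a (s n) x := ha.2 _ _ _

/-- For any sequence `s` and point `x`:
`⨆ N, ⨅_{n ≥ N} a (s n) x ≥ C s ⊗ ⨅ N, ⨆_{n ≥ N} a (s n) x`. -/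
theorem liminf_ge_cauchy_mul_limsup (Q : QuantaleStr V) {X : Type*}
    (a : X → X → V) (ha : IsVCat Q a) (s : ℕ → X) (x : X) :
    Q.mul (cauchyDeg Q a s) (⨅ N : ℕ, ⨆ n : ℕ, ⨆ _ : N ≤ n, a (s n) x) ≤
      ⨆ N : ℕ, ⨅ n : ℕ, ⨅ _ : N ≤ n, a (s n) x := by
  rw [cauchyDeg, Q.iSup_mul]
  refine iSup_mono fun N => le_iInf₂ fun n hn => ?_
  exact (QuantaleStr.mul_le_mul_left (iInf_le _ N) _).trans (ha.mul_iSup_tail_le s x hn)
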